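/- arXiv:1712.09167 — 3 statements merged into one kernel-verified Lean document; each statement's English description precedes it below -/
import Mathlib

section
/- For any bipartite density operator ρ_AB on H_A ⊗ H_B, (C^{A|B}_{l1}(ρ_AB))² − (C_{l1}(ρ_A))² ≥ 2(Tr ρ_AB² − Tr ρ_A²). -/
open scoped BigOperators ComplexOrder Kronecker

/-- Trace norm: `‖P‖_tr = Tr √(Pᴴ P)`. -/
noncomputable def traceNorm {n : Type*} [Fintype n] [DecidableEq n] (P : Matrix n n ℂ) : ℝ :=
  (((Matrix.posSemidef_conjTranspose_mul_self P).1.eigenvectorUnitary.1 *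
      Matrix.diagonal (((↑) : ℝ → ℂ) ∘ (√·) ∘ (Matrix.posSemidef_conjTranspose_mul_self P).1.eigenvalues) *
      (star (Matrix.posSemidef_conjTranspose_mul_self P).1.eigenvectorUnitary : Matrix n n ℂ)).trace).re

/-- The B-blocks of an operator on H_A ⊗ H_B. -/
def blockB {A B : Type*} (Q : Matrix (A × B) (A × B) ℂ) (i j : A) : Matrix B B ℂ :=
  fun b b' => Q (i, b) (j, b')

/-- l1 norm of IQ coherence: C^{A|B}_{l1}(ρ) = Σ_{i≠j} ‖ρ^B_{ij}‖_tr. -/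
noncomputable def CIQl1 {A B : Type*} [Fintype A] [Fintype B] [DecidableEq A] [DecidableEq B]
    (ρ : Matrix (A × B) (A × B) ℂ) : ℝ :=
  ∑ i, ∑ j, if i = j then 0 else traceNorm (blockB ρ i j)

/-! Write `f i j = ‖ρ_{ij}‖_tr` and `g i j = |Tr ρ_{ij}|` for `i ≠ j`, both zero on the diagonal;
then `0 ≤ g ≤ f` and both are symmetric, since `ρ_{ji} = ρ_{ij}ᴴ` and `Pᴴ` has the same singular
values as `P`. Expanding, `(Σ f)² - (Σ g)² = Σ_{p,q} (f_p f_q - g_p g_q)` is a sum of nonnegative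
terms, and keeping only `q = p` and `q = swap p` leaves `2 Σ_p (f_p² - g_p²)`. On the other side,
`Tr ρ² - Tr ρ_A² = Σ_{i,j} (Tr ρ_{ij} ρ_{ij}ᴴ - |Tr ρ_{ij}|²)`: off the diagonal
`Tr ρ_{ij} ρ_{ij}ᴴ` is the sum of the squared singular values, at most `‖ρ_{ij}‖_tr²`, and on the
diagonal `Tr ρ_{ii}² ≤ (Tr ρ_{ii})²` because `ρ_{ii}` is positive semidefinite. -/

open Matrix

section TraceNorm

variable {n : Type*} [Fintype n] [DecidableEq n]

open scoped InnerProductSpace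

theorem Matrix.trace_eq_sum_inner_toEuclideanLin (P : Matrix n n ℂ)
    (b : OrthonormalBasis n ℂ (EuclideanSpace ℂ n)) :
    P.trace = ∑ k, ⟪b k, toEuclideanLin P (b k)⟫_ℂ := by
  rw [← LinearMap.trace_eq_sum_inner (toEuclideanLin P) b]
  exact (trace_toLin_eq P (EuclideanSpace.basisFun n ℂ).toBasis).symm

theorem Matrix.IsHermitian.trace_mul_self {C : Matrix n n ℂ} (hC : C.IsHermitian) :
    (C * C).trace = ∑ k, (hC.eigenvalues k : ℂ) ^ 2 := by
  rw [trace_eq_sum_inner_toEuclideanLin _ hC.eigenvectorBasis]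
  refine Finset.sum_congr rfl fun k _ => ?_
  rw [toLpLin_apply, ← mulVec_mulVec, hC.mulVec_eigenvectorBasis, mulVec_smul,
    hC.mulVec_eigenvectorBasis]
  simp [sq]

theorem Matrix.PosSemidef.re_trace_mul_self_le {C : Matrix n n ℂ} (hC : C.PosSemidef) :
    (C * C).trace.re ≤ (C.trace * C.trace).re := by
  have hsum : ∑ k, hC.1.eigenvalues k ^ 2 ≤ (∑ k, hC.1.eigenvalues k) ^ 2 :=
    Finset.sum_sq_le_sq_sum_of_nonneg fun k _ => hC.eigenvalues_nonneg k
  rw [hC.1.trace_mul_self, hC.1.trace_eq_sum_eigenvalues, ← sq]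
  simpa only [RCLike.ofReal_eq_complex_ofReal, ← Complex.ofReal_pow, ← Complex.ofReal_sum,
    Complex.ofReal_re] using hsum

noncomputable def Matrix.singularValues (P : Matrix n n ℂ) : n → ℝ :=
  (√·) ∘ (posSemidef_conjTranspose_mul_self P).1.eigenvalues

theorem Matrix.traceNorm_eq_sum_singularValues (P : Matrix n n ℂ) :
    traceNorm P = ∑ k, P.singularValues k := by
  rw [traceNorm, trace_mul_cycle, Unitary.coe_star_mul_self, one_mul, trace_diagonal]
  simp [singularValues]

theorem Matrix.singularValues_nonneg (P : Matrix n n ℂ) (k : n) : 0 ≤ P.singularValues k :=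
  Real.sqrt_nonneg _

theorem Matrix.singularValues_conjTranspose (P : Matrix n n ℂ) :
    Pᴴ.singularValues = P.singularValues := by
  rw [singularValues, singularValues, IsHermitian.eigenvalues_eq_eigenvalues_iff .. |>.mpr]
  rw [conjTranspose_conjTranspose, charpoly_mul_comm]

theorem Matrix.traceNorm_conjTranspose (P : Matrix n n ℂ) : traceNorm Pᴴ = traceNorm P := by
  simp only [traceNorm_eq_sum_singularValues, singularValues_conjTranspose]

theorem Matrix.re_trace_conjTranspose_mul_self (P : Matrix n n ℂ) :
    (Pᴴ * P).trace.re = ∑ k, P.singularValues k ^ 2 := by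
  have hP := posSemidef_conjTranspose_mul_self P
  simp [hP.1.trace_eq_sum_eigenvalues, singularValues, Real.sq_sqrt (hP.eigenvalues_nonneg _)]

theorem Matrix.re_trace_mul_conjTranspose_le_traceNorm_sq (P : Matrix n n ℂ) :
    (P * Pᴴ).trace.re ≤ traceNorm P ^ 2 := by
  rw [trace_mul_comm, re_trace_conjTranspose_mul_self, traceNorm_eq_sum_singularValues]
  exact Finset.sum_sq_le_sq_sum_of_nonneg fun k _ => singularValues_nonneg P k

theorem Matrix.norm_toEuclideanLin_eigenvectorBasis (P : Matrix n n ℂ) (k : n) :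
    ‖toEuclideanLin P ((posSemidef_conjTranspose_mul_self P).1.eigenvectorBasis k)‖ =
      P.singularValues k := by
  rw [singularValues, Function.comp_apply, ← Real.sqrt_sq (norm_nonneg _),
    ← inner_self_eq_norm_sq (𝕜 := ℂ), ← LinearMap.adjoint_inner_right,
    ← toEuclideanLin_conjTranspose_eq_adjoint, IsHermitian.eigenvalues_eq,
    EuclideanSpace.inner_eq_star_dotProduct, dotProduct_comm]
  simp [toLpLin_apply, mulVec_mulVec]

/-- Each eigenvector `v` of `Pᴴ P` has `|⟨v, P v⟩| ≤ ‖P v‖`, which is the corresponding singular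
value; summing over an eigenbasis bounds the trace. -/
theorem Matrix.norm_trace_le_traceNorm (P : Matrix n n ℂ) : ‖P.trace‖ ≤ traceNorm P := by
  rw [trace_eq_sum_inner_toEuclideanLin P (posSemidef_conjTranspose_mul_self P).1.eigenvectorBasis,
    traceNorm_eq_sum_singularValues]
  refine (norm_sum_le _ _).trans (Finset.sum_le_sum fun k _ => ?_)
  calc _ ≤ _ := norm_inner_le_norm _ _
    _ = _ := by rw [OrthonormalBasis.norm_eq_one, one_mul, norm_toEuclideanLin_eigenvectorBasis]

end TraceNorm

theorem two_mul_sum_sq_sub_sq_le_of_comp_eq {κ : Type*} [Fintype κ] (σ : κ → κ) (f g : κ → ℝ)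
    (hg : ∀ p, 0 ≤ g p) (hgf : ∀ p, g p ≤ f p) (hfσ : ∀ p, f (σ p) = f p)
    (hgσ : ∀ p, g (σ p) = g p) (hfix : ∀ p, σ p = p → f p = 0) :
    2 * ∑ p, (f p ^ 2 - g p ^ 2) ≤ (∑ p, f p) ^ 2 - (∑ p, g p) ^ 2 := by
  classical
  have hterm : ∀ p q, 0 ≤ f p * f q - g p * g q := fun p q =>
    sub_nonneg.2 (mul_le_mul (hgf p) (hgf q) (hg q) ((hg p).trans (hgf p)))
  have hexpand : (∑ p, f p) ^ 2 - (∑ p, g p) ^ 2 = ∑ p, ∑ q, (f p * f q - g p * g q) := by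
    simp only [sq, Finset.sum_mul_sum, ← Finset.sum_sub_distrib]
  rw [hexpand, Finset.mul_sum]
  refine Finset.sum_le_sum fun p _ => ?_
  by_cases hp : σ p = p
  · have hfp := hfix p hp
    have hgp : g p = 0 := le_antisymm (hfp ▸ hgf p) (hg p)
    simp [hfp, hgp]
  · calc 2 * (f p ^ 2 - g p ^ 2)
        = ∑ q ∈ {p, σ p}, (f p * f q - g p * g q) := by
          rw [Finset.sum_pair (Ne.symm hp), hfσ, hgσ]; ring
      _ ≤ ∑ q, (f p * f q - g p * g q) :=
          Finset.sum_le_sum_of_subset_of_nonneg (Finset.subset_univ _) fun q _ _ => hterm p q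

theorem two_mul_sum_sum_sq_sub_sq_le {ι : Type*} [Fintype ι] (f g : ι → ι → ℝ)
    (hg : ∀ i j, 0 ≤ g i j) (hgf : ∀ i j, g i j ≤ f i j) (hf_symm : ∀ i j, f j i = f i j)
    (hg_symm : ∀ i j, g j i = g i j) (hf_diag : ∀ i, f i i = 0) :
    2 * ∑ i, ∑ j, (f i j ^ 2 - g i j ^ 2) ≤ (∑ i, ∑ j, f i j) ^ 2 - (∑ i, ∑ j, g i j) ^ 2 := by
  simpa only [Fintype.sum_prod_type] using
    two_mul_sum_sq_sub_sq_le_of_comp_eq Prod.swap (fun p => f p.1 p.2) (fun p => g p.1 p.2)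
      (fun p => hg _ _) (fun p => hgf _ _) (fun p => hf_symm _ _) (fun p => hg_symm _ _)
      (fun p hp => by rw [← congrArg Prod.fst hp]; exact hf_diag _)

section Blocks

variable {A B : Type*}

theorem Matrix.IsHermitian.conjTranspose_blockB {ρ : Matrix (A × B) (A × B) ℂ}
    (hρ : ρ.IsHermitian) (i j : A) : (blockB ρ i j)ᴴ = blockB ρ j i := by
  ext b b'
  exact congrFun (congrFun hρ (j, b)) (i, b')

theorem Matrix.PosSemidef.blockB_self [Fintype A] [Fintype B] {ρ : Matrix (A × B) (A × B) ℂ}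
    (hρ : ρ.PosSemidef) (i : A) : (blockB ρ i i).PosSemidef :=
  hρ.submatrix (Prod.mk i)

theorem trace_mul_eq_sum_trace_blockB_mul [Fintype A] [Fintype B]
    (Q R : Matrix (A × B) (A × B) ℂ) :
    (Q * R).trace = ∑ i, ∑ j, (blockB Q i j * blockB R j i).trace := by
  simp only [trace, diag_apply, mul_apply, blockB, Fintype.sum_prod_type]
  exact Finset.sum_congr rfl fun i _ => Finset.sum_comm

theorem Matrix.PosSemidef.re_trace_blockB_mul_sub_le [Fintype A] [Fintype B] [DecidableEq A]
    [DecidableEq B] {ρ : Matrix (A × B) (A × B) ℂ} (hρ : ρ.PosSemidef) (i j : A) :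
    (blockB ρ i j * blockB ρ j i).trace.re - ((blockB ρ i j).trace * (blockB ρ j i).trace).re ≤
      (if i = j then 0 else traceNorm (blockB ρ i j)) ^ 2 -
        (if i = j then 0 else ‖(blockB ρ i j).trace‖) ^ 2 := by
  split_ifs with hij
  · subst hij
    simpa using (hρ.blockB_self i).re_trace_mul_self_le
  · rw [← hρ.1.conjTranspose_blockB i j, trace_conjTranspose, Complex.star_def, Complex.mul_conj,
      Complex.normSq_eq_norm_sq, Complex.ofReal_re]
    linarith [re_trace_mul_conjTranspose_le_traceNorm_sq (blockB ρ i j)]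

end Blocks

theorem CIQl1_sq_sub_Cl1_sq_ge_general {A B : Type*} [Fintype A] [Fintype B] [DecidableEq A]
    [DecidableEq B] (ρ : Matrix (A × B) (A × B) ℂ) (hρ : ρ.PosSemidef) :
    (CIQl1 ρ) ^ 2 - (∑ i, ∑ j, if i = j then 0 else ‖(blockB ρ i j).trace‖) ^ 2 ≥
      2 * (((ρ * ρ).trace).re -
        ((((Matrix.of fun i j => (blockB ρ i j).trace) :
            Matrix A A ℂ) * (Matrix.of fun i j => (blockB ρ i j).trace)).trace).re) := by
  have hρA : ((Matrix.of fun i j => (blockB ρ i j).trace) *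
      (Matrix.of fun i j => (blockB ρ i j).trace)).trace =
        ∑ i, ∑ j, (blockB ρ i j).trace * (blockB ρ j i).trace := by
    simp [trace, mul_apply]
  have hsymm (i j : A) : blockB ρ j i = (blockB ρ i j)ᴴ := (hρ.1.conjTranspose_blockB i j).symm
  rw [ge_iff_le, trace_mul_eq_sum_trace_blockB_mul, hρA]
  calc _ = 2 * ∑ i, ∑ j, ((blockB ρ i j * blockB ρ j i).trace.re -
          ((blockB ρ i j).trace * (blockB ρ j i).trace).re) := by
        simp only [Complex.re_sum, Finset.sum_sub_distrib]
    _ ≤ 2 * ∑ i, ∑ j, ((if i = j then 0 else traceNorm (blockB ρ i j)) ^ 2 -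
          (if i = j then 0 else ‖(blockB ρ i j).trace‖) ^ 2) := by
        gcongr 2 * ?_
        exact Finset.sum_le_sum fun i _ => Finset.sum_le_sum fun j _ =>
          hρ.re_trace_blockB_mul_sub_le i j
    _ ≤ _ := by
        refine two_mul_sum_sum_sq_sub_sq_le _ _ (fun i j => ?_) (fun i j => ?_) (fun i j => ?_)
          (fun i j => ?_) (fun i => if_pos rfl)
        · split_ifs <;> simp
        · split_ifs
          exacts [le_rfl, norm_trace_le_traceNorm _]
        · simp only [eq_comm (a := j), hsymm j i, traceNorm_conjTranspose]
        · simp only [eq_comm (a := j), hsymm j i, trace_conjTranspose, norm_star]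

/-- (C^{A|B}_{l1}(ρ_AB))² − (C_{l1}(ρ_A))² ≥ 2 (Tr ρ_AB² − Tr ρ_A²),
where ρ_A = Tr_B ρ_AB has entries (ρ_A)_{ij} = Tr ρ^B_{ij}. -/
theorem CIQl1_sq_sub_Cl1_sq_ge {A B : Type*} [Fintype A] [Fintype B] [DecidableEq A]
    [DecidableEq B] (ρ : Matrix (A × B) (A × B) ℂ) (hρ : ρ.PosSemidef) (hTr : ρ.trace = 1) :
    (CIQl1 ρ) ^ 2 - (∑ i, ∑ j, if i = j then 0 else ‖(blockB ρ i j).trace‖) ^ 2 ≥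
      2 * (((ρ * ρ).trace).re -
        ((((Matrix.of fun i j => (blockB ρ i j).trace) :
            Matrix A A ℂ) * (Matrix.of fun i j => (blockB ρ i j).trace)).trace).re) :=
  CIQl1_sq_sub_Cl1_sq_ge_general ρ hρ
end

section
/- There exists a tripartite density operator ρ_ABC with C^{A|BC}_r(ρ_ABC) < C^{A|B}_r(ρ_AB) + C^{A|C}_r(ρ_AC); in particular, any state of the form ρ_ABC = ρ_{A1 B} ⊗ ρ_{A2 C} with H_A = H_{A1} ⊗ H_{A2}, where both factors have nonzero IQ coherence, violates the would-be monogamy relation. -/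
open scoped BigOperators ComplexOrder Kronecker

/-- Von Neumann entropy S(ρ) = −Tr ρ log ρ, via the eigenvalues of a Hermitian matrix
(junk value 0 for non-Hermitian input). -/
noncomputable def vN {n : Type*} [Fintype n] [DecidableEq n] (ρ : Matrix n n ℂ) : ℝ :=
  if h : ρ.IsHermitian then -∑ i, h.eigenvalues i * Real.log (h.eigenvalues i) else 0

/-- Dephasing channel Δ_A on the A-factor of H_A ⊗ H_B (in the fixed basis of A). -/
def dephA {A B : Type*} [DecidableEq A] (ρ : Matrix (A × B) (A × B) ℂ) :
    Matrix (A × B) (A × B) ℂ :=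
  fun p q => if p.1 = q.1 then ρ p q else 0

/-- Relative entropy of IQ coherence, C^{A|B}_r(ρ) = S(Δ_A(ρ)) − S(ρ). -/
noncomputable def CrIQ {A B : Type*} [Fintype A] [Fintype B] [DecidableEq A] [DecidableEq B]
    (ρ : Matrix (A × B) (A × B) ℂ) : ℝ :=
  vN (dephA ρ) - vN ρ

/-!
The witness is the product state `|Φ⁺⟩_{A₁B} ⊗ |+⟩_{A₂} ⊗ |0⟩_C`. It and both of its marginals
are of the form `c • [p ∈ s ∧ q ∈ s ∧ f p = f q]` (`fiberMatrix`). When every fibre of `f` in `s`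
has `k` elements such a matrix satisfies `M * M = (c * k) • M`, so for `#s * c = 1` its nonzero
eigenvalues all equal `c * k` and its entropy is `-log (c * k)`. Dephasing `A` refines the fibres
by the `A`-index, into fibres of size `k'`, so `C_r = log (k / k')`. Here this gives
`C^{A|BC} = log 4 = C^{A|B}` while `C^{A|C} = log 2 > 0`.
-/

open Matrix Finset

section Entropy

variable {n : Type*} [Fintype n] [DecidableEq n] {M : Matrix n n ℂ} {c : ℝ}

lemma Matrix.IsHermitian.eigenvalues_eq_zero_or_eq_of_mul_self_eq_smul (hM : M.IsHermitian)
    (hsq : M * M = (c : ℂ) • M) (i : n) : hM.eigenvalues i = 0 ∨ hM.eigenvalues i = c := by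
  set l := hM.eigenvalues i
  set v : n → ℂ := ⇑(hM.eigenvectorBasis i)
  have hv : v ≠ 0 := (WithLp.ofLp_eq_zero 2).ne.2 (hM.eigenvectorBasis.orthonormal.ne_zero i)
  have hMv : M *ᵥ v = (l : ℂ) • v := by
    rw [hM.mulVec_eigenvectorBasis, RCLike.real_smul_eq_coe_smul (K := ℂ)]
    rfl
  have hl : ((l * l : ℝ) : ℂ) • v = ((c * l : ℝ) : ℂ) • v := by
    calc ((l * l : ℝ) : ℂ) • v = (M * M) *ᵥ v := by
          rw [← mulVec_mulVec, hMv, mulVec_smul, hMv, smul_smul]; push_cast; rfl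
      _ = ((c * l : ℝ) : ℂ) • v := by
          rw [hsq, smul_mulVec, hMv, smul_smul]; push_cast; rfl
  have : l * (l - c) = 0 := by
    have := Complex.ofReal_injective (smul_left_injective ℂ hv hl)
    linear_combination this
  rcases mul_eq_zero.mp this with h | h
  · exact Or.inl h
  · exact Or.inr (sub_eq_zero.mp h)

lemma vN_eq_neg_log_of_mul_self_eq_smul (hM : M.IsHermitian) (hsq : M * M = (c : ℂ) • M)
    (htr : M.trace = 1) : vN M = -Real.log c := by
  have hsum : ∑ i, hM.eigenvalues i = 1 :=
    Complex.ofReal_injective (by push_cast; exact hM.trace_eq_sum_eigenvalues.symm.trans htr)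
  have hterm (i : n) : hM.eigenvalues i * Real.log (hM.eigenvalues i)
      = hM.eigenvalues i * Real.log c := by
    rcases hM.eigenvalues_eq_zero_or_eq_of_mul_self_eq_smul hsq i with h | h <;> simp [h]
  rw [vN, dif_pos hM, Finset.sum_congr rfl fun i _ => hterm i, ← Finset.sum_mul, hsum, one_mul]

end Entropy

section FiberMatrix

variable {n β : Type*} [DecidableEq n] [DecidableEq β]

def fiberMatrix (s : Finset n) (f : n → β) (c : ℝ) : Matrix n n ℂ :=
  of fun p q => if p ∈ s ∧ q ∈ s ∧ f p = f q then (c : ℂ) else 0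

variable (s : Finset n) (f : n → β)

lemma isHermitian_fiberMatrix (c : ℝ) : (fiberMatrix s f c).IsHermitian := by
  ext p q
  simp only [fiberMatrix, conjTranspose_apply, of_apply, apply_ite star, star_zero,
    RCLike.star_def, Complex.conj_ofReal]
  exact if_congr ⟨fun ⟨hq, hp, h⟩ => ⟨hp, hq, h.symm⟩, fun ⟨hp, hq, h⟩ => ⟨hq, hp, h.symm⟩⟩ rfl rfl

variable [Fintype n]

lemma posSemidef_fiberMatrix [Fintype β] {c : ℝ} (hc : 0 ≤ c) :
    (fiberMatrix s f c).PosSemidef := by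
  let B : Matrix β n ℂ := of fun j p => if p ∈ s ∧ f p = j then (√c : ℂ) else 0
  have hB : fiberMatrix s f c = Bᴴ * B := by
    ext p q
    have hterm (j : β) : star (B j p) * B j q
        = if f p = j then (if p ∈ s ∧ q ∈ s ∧ f p = f q then (c : ℂ) else 0) else 0 := by
      simp only [B, of_apply]
      split_ifs <;> simp_all [← Complex.ofReal_mul, Real.mul_self_sqrt hc]
    simp only [mul_apply, conjTranspose_apply, hterm, Finset.sum_ite_eq, mem_univ, if_true]
    rfl
  exact hB ▸ posSemidef_conjTranspose_mul_self B

lemma trace_fiberMatrix (c : ℝ) : (fiberMatrix s f c).trace = #s * c := by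
  simp only [trace, fiberMatrix, diag_apply, of_apply, and_true, and_self, sum_ite_mem, univ_inter,
    sum_const, nsmul_eq_mul]

lemma fiberMatrix_mul_self (c : ℝ) {k : ℕ} (hk : ∀ p ∈ s, #{q ∈ s | f q = f p} = k) :
    fiberMatrix s f c * fiberMatrix s f c = ((c * k : ℝ) : ℂ) • fiberMatrix s f c := by
  ext p q
  have hterm (r : n) : fiberMatrix s f c p r * fiberMatrix s f c r q
      = if r ∈ {r ∈ s | f r = f p} then
          (if p ∈ s ∧ q ∈ s ∧ f p = f q then (c : ℂ) * c else 0) else 0 := by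
    simp only [fiberMatrix, of_apply, mem_filter]
    split_ifs <;> simp_all
  rw [mul_apply, Finset.sum_congr rfl fun r _ => hterm r]
  simp only [sum_ite_mem, univ_inter, sum_const, nsmul_eq_mul, Matrix.smul_apply, fiberMatrix,
    of_apply, smul_eq_mul]
  split_ifs with h
  · rw [hk p h.1]; push_cast; ring
  · simp

lemma vN_fiberMatrix {c : ℝ} (hc : #s * c = 1) {k : ℕ} (hk : ∀ p ∈ s, #{q ∈ s | f q = f p} = k) :
    vN (fiberMatrix s f c) = -Real.log (c * k) :=
  vN_eq_neg_log_of_mul_self_eq_smul (isHermitian_fiberMatrix s f c) (fiberMatrix_mul_self s f c hk)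
    (by rw [trace_fiberMatrix]; exact_mod_cast hc)

end FiberMatrix

section Coherence

variable {A B β : Type*} [DecidableEq A] [DecidableEq B] [DecidableEq β]

lemma dephA_fiberMatrix (s : Finset (A × B)) (f : A × B → β) (c : ℝ) :
    dephA (fiberMatrix s f c) = fiberMatrix s (fun p => (p.1, f p)) c := by
  ext p q
  simp only [dephA, fiberMatrix, of_apply, Prod.mk.injEq]
  split_ifs <;> tauto

lemma CrIQ_fiberMatrix [Fintype A] [Fintype B] (s : Finset (A × B)) (f : A × B → β) {c : ℝ}
    (hc : (#s : ℝ) * c = 1) {k k' : ℕ} (hk : ∀ p ∈ s, #{q ∈ s | f q = f p} = k)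
    (hk' : ∀ p ∈ s, #{q ∈ s | (q.1, f q) = (p.1, f p)} = k') :
    CrIQ (fiberMatrix s f c) = Real.log ((k : ℝ) / k') := by
  have hc0 : c ≠ 0 := by rintro rfl; simp at hc
  obtain ⟨p, hp⟩ : s.Nonempty := by
    rw [← card_pos, Nat.pos_iff_ne_zero]; rintro h; simp [h] at hc
  have hk0 : (k : ℝ) ≠ 0 := by
    rw [← hk p hp]; exact Nat.cast_ne_zero.mpr (card_ne_zero.mpr ⟨p, mem_filter.mpr ⟨hp, rfl⟩⟩)
  have hk'0 : (k' : ℝ) ≠ 0 := by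
    rw [← hk' p hp]; exact Nat.cast_ne_zero.mpr (card_ne_zero.mpr ⟨p, mem_filter.mpr ⟨hp, rfl⟩⟩)
  rw [CrIQ, dephA_fiberMatrix, vN_fiberMatrix _ _ hc hk', vN_fiberMatrix _ _ hc hk,
    Real.log_mul hc0 hk0, Real.log_mul hc0 hk'0, Real.log_div hk0 hk'0]
  ring

end Coherence

lemma ite_add_ite_eq_ite_or {M : Type*} [AddZeroClass M] {P Q : Prop} [Decidable P]
    [Decidable Q] (h : ¬(P ∧ Q)) (x : M) :
    (if P then x else 0) + (if Q then x else 0) = if P ∨ Q then x else 0 := by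
  by_cases hP : P <;> by_cases hQ : Q <;> simp_all

lemma cast_card_mul_quarter {α : Type*} {s : Finset α} (hs : #s = 4) :
    (#s : ℝ) * (1 / 4) = 1 := by
  rw [hs]; norm_num

/-- `|Φ⁺⟩⟨Φ⁺|_{A₁B} ⊗ |+⟩⟨+|_{A₂} ⊗ |0⟩⟨0|_C`, indexed as `((a₁, a₂), b, c)`. -/
noncomputable def monogamyWitness :
    Matrix ((Fin 2 × Fin 2) × Fin 2 × Fin 2) ((Fin 2 × Fin 2) × Fin 2 × Fin 2) ℂ :=
  fiberMatrix {p | p.1.1 = p.2.1 ∧ p.2.2 = 0} (fun _ => ()) (1 / 4)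

lemma monogamyWitness_marginalAB :
    (of fun p q => ∑ c, monogamyWitness (p.1, p.2, c) (q.1, q.2, c) :
      Matrix ((Fin 2 × Fin 2) × Fin 2) ((Fin 2 × Fin 2) × Fin 2) ℂ) =
    fiberMatrix {p | p.1.1 = p.2} (fun _ => ()) (1 / 4) := by
  ext ⟨⟨a₁, a₂⟩, b⟩ ⟨⟨a₁', a₂'⟩, b'⟩
  simp only [monogamyWitness, fiberMatrix, of_apply, Fin.sum_univ_two, mem_filter, mem_univ,
    true_and, and_true]
  rw [ite_add_ite_eq_ite_or (by decide +revert)]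
  exact if_congr (by decide +revert) rfl rfl

lemma monogamyWitness_marginalAC :
    (of fun p q => ∑ m, monogamyWitness (p.1, m, p.2) (q.1, m, q.2) :
      Matrix ((Fin 2 × Fin 2) × Fin 2) ((Fin 2 × Fin 2) × Fin 2) ℂ) =
    fiberMatrix {p | p.2 = 0} (fun p => p.1.1) (1 / 4) := by
  ext ⟨⟨a₁, a₂⟩, c⟩ ⟨⟨a₁', a₂'⟩, c'⟩
  simp only [monogamyWitness, fiberMatrix, of_apply, Fin.sum_univ_two, mem_filter, mem_univ,
    true_and, and_true]
  rw [ite_add_ite_eq_ite_or (by decide +revert)]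
  exact if_congr (by decide +revert) rfl rfl

lemma CrIQ_monogamyWitness : CrIQ monogamyWitness = Real.log 4 := by
  rw [monogamyWitness, CrIQ_fiberMatrix _ _ (cast_card_mul_quarter (by decide))
    (k := 4) (k' := 1) (by decide) (by decide)]
  norm_num

lemma CrIQ_monogamyWitness_marginalAB :
    CrIQ (of fun p q => ∑ c, monogamyWitness (p.1, p.2, c) (q.1, q.2, c) :
      Matrix ((Fin 2 × Fin 2) × Fin 2) ((Fin 2 × Fin 2) × Fin 2) ℂ) = Real.log 4 := by
  rw [monogamyWitness_marginalAB, CrIQ_fiberMatrix _ _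
    (cast_card_mul_quarter (by decide)) (k := 4) (k' := 1) (by decide) (by decide)]
  norm_num

lemma CrIQ_monogamyWitness_marginalAC :
    CrIQ (of fun p q => ∑ m, monogamyWitness (p.1, m, p.2) (q.1, m, q.2) :
      Matrix ((Fin 2 × Fin 2) × Fin 2) ((Fin 2 × Fin 2) × Fin 2) ℂ) = Real.log 2 := by
  rw [monogamyWitness_marginalAC, CrIQ_fiberMatrix _ _
    (cast_card_mul_quarter (by decide)) (k := 2) (k' := 1) (by decide) (by decide)]
  norm_num

/-- there exists a tripartite density operator (with A = A₁ ⊗ A₂ a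
two-qubit system, B and C qubits) such that
C^{A|BC}_r(ρ_ABC) < C^{A|B}_r(ρ_AB) + C^{A|C}_r(ρ_AC). -/
theorem exists_CrIQ_monogamy_violation :
    ∃ ρ : Matrix ((Fin 2 × Fin 2) × Fin 2 × Fin 2) ((Fin 2 × Fin 2) × Fin 2 × Fin 2) ℂ,
      ρ.PosSemidef ∧ ρ.trace = 1 ∧
      CrIQ ρ <
        CrIQ ((Matrix.of fun p q => ∑ c, ρ (p.1, p.2, c) (q.1, q.2, c)) :
            Matrix ((Fin 2 × Fin 2) × Fin 2) ((Fin 2 × Fin 2) × Fin 2) ℂ) +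
        CrIQ ((Matrix.of fun p q => ∑ m, ρ (p.1, m, p.2) (q.1, m, q.2)) :
            Matrix ((Fin 2 × Fin 2) × Fin 2) ((Fin 2 × Fin 2) × Fin 2) ℂ) := by
  refine ⟨monogamyWitness, posSemidef_fiberMatrix _ _ (by norm_num), ?_, ?_⟩
  · rw [monogamyWitness, trace_fiberMatrix]
    exact_mod_cast cast_card_mul_quarter (by decide)
  · rw [CrIQ_monogamyWitness, CrIQ_monogamyWitness_marginalAB, CrIQ_monogamyWitness_marginalAC]
    linarith [Real.log_pos one_lt_two]
end

section
/- For any bipartite density operator ρ_AB, the max-relative entropy of IQ coherence and the l1 IQ coherence satisfy 1 + C^{A|B}_{l1}(ρ_AB)/(d_A − 1) ≤ 2^{C^{A|B}_max(ρ_AB)} ≤ 1 + C^{A|B}_{l1}(ρ_AB). -/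
open scoped BigOperators ComplexOrder Kronecker

/-- The set of incoherent-quantum (IQ) states: convex combinations
Σ_k p_k σ^A_k ⊗ τ^B_k with each σ^A_k an incoherent (diagonal) state on A and
each τ^B_k a state on B. -/
def IQstates (A B : Type*) [Fintype A] [Fintype B] [DecidableEq A] [DecidableEq B] :
    Set (Matrix (A × B) (A × B) ℂ) :=
  { σ | ∃ (k : ℕ) (w : Fin k → ℝ) (sA : Fin k → Matrix A A ℂ) (tB : Fin k → Matrix B B ℂ),
      (∀ m, 0 ≤ w m) ∧ (∑ m, w m = 1) ∧
      (∀ m, (sA m).PosSemidef ∧ (sA m).trace = 1 ∧ ∀ i j, i ≠ j → sA m i j = 0) ∧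
      (∀ m, (tB m).PosSemidef ∧ (tB m).trace = 1) ∧
      σ = ∑ m, (w m : ℂ) • (sA m ⊗ₖ tB m) }

/-- Max-relative entropy of IQ coherence:
C^{A|B}_max(ρ) = log₂ min {λ : ρ ≤ λσ for some σ ∈ IQ}. -/
noncomputable def CmaxIQ {A B : Type*} [Fintype A] [Fintype B] [DecidableEq A] [DecidableEq B]
    (ρ : Matrix (A × B) (A × B) ℂ) : ℝ :=
  Real.logb 2 (sInf {l : ℝ | ∃ σ ∈ IQstates A B, ((l : ℂ) • σ - ρ).PosSemidef})

/-!
Lower bound: if `lσ - ρ ≥ 0` with `σ` incoherent-quantum, the off-diagonal blocks of `lσ - ρ` are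
those of `-ρ`. In any positive block matrix `M` one has `2‖M_ij‖_tr ≤ Tr M_ii + Tr M_jj`: test the
`2 × 2` block `[[M_ii, M_ij], [M_ji, M_jj]]` against the column `(1, -U)`, where `U` is a
contraction with `Tr (M_ij U) = ‖M_ij‖_tr`. Summing over `i ≠ j` gives `C_l1(ρ) ≤ (d_A - 1)(l - 1)`.

Upper bound: factor every block as `ρ_ij = Y Zᴴ` with `Tr Y Yᴴ = Tr Z Zᴴ = ‖ρ_ij‖_tr`. The Gram
matrix of `|i⟩⟨j| ⊗ Y - |j⟩⟨j| ⊗ Z` is positive with off-diagonal blocks `-ρ_ij` and `-ρ_ji`, so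
adding half the sum of these Gram matrices over `i ≠ j` to `ρ` gives a positive block-diagonal
matrix of trace `1 + C_l1(ρ)`; normalised, it is an IQ state.
-/

open Matrix
open scoped MatrixOrder

namespace Matrix.IsHermitian

variable {𝕜 n : Type*} [RCLike 𝕜] [Fintype n] [DecidableEq n] {A : Matrix n n 𝕜}
  (hA : A.IsHermitian)

lemma cfc_mul_cfc (f g : ℝ → ℝ) : hA.cfc f * hA.cfc g = hA.cfc (f * g) := by
  simp only [IsHermitian.cfc, ← map_mul, diagonal_mul_diagonal]
  congr 2; ext i; simp

lemma conjTranspose_cfc (f : ℝ → ℝ) : (hA.cfc f)ᴴ = hA.cfc f := by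
  rw [← star_eq_conjTranspose, IsHermitian.cfc, ← map_star, star_eq_conjTranspose,
    diagonal_conjTranspose]
  congr 2; ext i; simp

lemma cfc_id_eq : hA.cfc id = A := by
  rw [← cfc_eq]; exact cfc_id ℝ A

lemma cfc_zero_eq : hA.cfc 0 = 0 := by
  simp [IsHermitian.cfc]

lemma cfc_one_eq : hA.cfc 1 = 1 := by
  simp [IsHermitian.cfc]

lemma cfc_sub (f g : ℝ → ℝ) : hA.cfc (f - g) = hA.cfc f - hA.cfc g := by
  simp only [IsHermitian.cfc]
  rw [← map_sub, diagonal_sub]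
  congr 2; ext i; simp

lemma cfc_mul_self (f : ℝ → ℝ) : hA.cfc f * A = hA.cfc (fun x => f x * x) := by
  calc hA.cfc f * A = hA.cfc f * hA.cfc id := by rw [hA.cfc_id_eq]
    _ = _ := hA.cfc_mul_cfc f id

lemma trace_cfc (f : ℝ → ℝ) : (hA.cfc f).trace = ∑ i, (f (hA.eigenvalues i) : 𝕜) := by
  simp [IsHermitian.cfc, trace_mul_cycle _ _ (star _ : Matrix n n 𝕜)]

lemma cfc_congr {f g : ℝ → ℝ} (h : ∀ i, f (hA.eigenvalues i) = g (hA.eigenvalues i)) :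
    hA.cfc f = hA.cfc g := by
  simp only [IsHermitian.cfc]
  congr 2; ext i; simp [h]

lemma posSemidef_cfc {f : ℝ → ℝ} (hf : ∀ i, 0 ≤ f (hA.eigenvalues i)) :
    (hA.cfc f).PosSemidef := by
  rw [IsHermitian.cfc, Unitary.conjStarAlgAut_apply]
  exact (posSemidef_diagonal_iff.mpr fun i => by simpa using hf i).mul_mul_conjTranspose_same _

end Matrix.IsHermitian

lemma Matrix.posSemidef_single_one {𝕜 n : Type*} [RCLike 𝕜] [Fintype n] [DecidableEq n]
    (i : n) : (single i i (1 : 𝕜)).PosSemidef := by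
  rw [← diagonal_single]
  exact .diagonal fun j => by rcases eq_or_ne j i with rfl | h <;> simp [*]

namespace Matrix.PosSemidef

variable {n : Type*} [Fintype n] {M : Matrix n n ℂ}

lemma re_trace_nonneg (hM : M.PosSemidef) : 0 ≤ M.trace.re :=
  (Complex.nonneg_iff.mp hM.trace_nonneg).1

lemma trace_eq_re (hM : M.PosSemidef) : M.trace = (M.trace.re : ℂ) :=
  Complex.eq_re_of_ofReal_le (by rw [Complex.ofReal_zero]; exact hM.trace_nonneg)

lemma trace_mul_nonneg {𝕜 : Type*} [RCLike 𝕜] [DecidableEq n] {P Q : Matrix n n 𝕜}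
    (hP : P.PosSemidef) (hQ : Q.PosSemidef) : 0 ≤ (P * Q).trace := by
  obtain ⟨R, rfl⟩ := CStarAlgebra.nonneg_iff_eq_star_mul_self.mp hQ.nonneg
  rw [star_eq_conjTranspose, ← mul_assoc, trace_mul_cycle]
  exact (hP.mul_mul_conjTranspose_same R).trace_nonneg

lemma exists_trace_eq_one_smul_eq [DecidableEq n] [Nonempty n] {G : Matrix n n ℂ}
    (hG : G.PosSemidef) :
    ∃ τ : Matrix n n ℂ, τ.PosSemidef ∧ τ.trace = 1 ∧ (G.trace.re : ℂ) • τ = G := by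
  by_cases h0 : G.trace.re = 0
  · have hG0 : G = 0 := by
      rw [← hG.trace_eq_zero_iff, hG.trace_eq_re, h0, Complex.ofReal_zero]
    obtain ⟨i⟩ := ‹Nonempty n›
    exact ⟨single i i 1, posSemidef_single_one i, trace_single_eq_same _ _, by simp [hG0]⟩
  · refine ⟨((G.trace.re⁻¹ : ℝ) : ℂ) • G, hG.smul ?_, ?_, ?_⟩
    · exact Complex.zero_le_real.mpr (inv_nonneg.mpr hG.re_trace_nonneg)
    · rw [trace_smul, hG.trace_eq_re, Complex.ofReal_re, smul_eq_mul, ← Complex.ofReal_mul,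
        inv_mul_cancel₀ h0, Complex.ofReal_one]
    · rw [smul_smul, ← Complex.ofReal_mul, mul_inv_cancel₀ h0, Complex.ofReal_one, one_smul]

end Matrix.PosSemidef

section TraceNorm

variable {n : Type*} [Fintype n] [DecidableEq n]

lemma traceNorm_eq_re_trace_abs (X : Matrix n n ℂ) : traceNorm X = (CFC.abs X).trace.re := by
  rw [CFC.abs, CFC.sqrt_eq_real_sqrt _ (star_mul_self_nonneg X), cfcₙ_eq_cfc,
    star_eq_conjTranspose, (isHermitian_conjTranspose_mul_self X).cfc_eq]
  rfl

lemma traceNorm_nonneg (X : Matrix n n ℂ) : 0 ≤ traceNorm X := by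
  rw [traceNorm_eq_re_trace_abs]
  exact (CFC.abs_nonneg X).posSemidef.re_trace_nonneg

lemma traceNorm_neg (X : Matrix n n ℂ) : traceNorm (-X) = traceNorm X := by
  rw [traceNorm_eq_re_trace_abs, traceNorm_eq_re_trace_abs, CFC.abs_neg]

section FunctionalCalculus

variable {X : Matrix n n ℂ} (hX : (Xᴴ * X).IsHermitian)

lemma trace_cfc_eq_traceNorm {f : ℝ → ℝ} (hf : ∀ x, 0 ≤ x → f x = √x) :
    (hX.cfc f).trace = traceNorm X := by
  have hsqrt : hX.cfc f = hX.cfc Real.sqrt :=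
    hX.cfc_congr fun i => hf _ (eigenvalues_conjTranspose_mul_self_nonneg X i)
  rw [hsqrt]
  show _ = ((hX.cfc Real.sqrt).trace.re : ℂ)
  rw [hX.trace_cfc]
  simp

lemma trace_mul_cfc_mul_conjTranspose (f : ℝ → ℝ) :
    (X * hX.cfc f * Xᴴ).trace = (hX.cfc (fun x => f x * x)).trace := by
  rw [trace_mul_cycle, trace_mul_comm, hX.cfc_mul_self]

lemma mul_cfc_eq_self {f : ℝ → ℝ} (hf : ∀ x, 0 < x → f x = 1) : X * hX.cfc f = X := by
  have hvanish : ∀ x, 0 ≤ x → (f x - 1) * x * (f x - 1) = 0 := fun x hx => by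
    rcases hx.eq_or_lt with rfl | hx
    · simp
    · simp [hf x hx]
  have h0 : X * hX.cfc (f - 1) = 0 := by
    rw [← conjTranspose_mul_self_eq_zero]
    calc (X * hX.cfc (f - 1))ᴴ * (X * hX.cfc (f - 1))
        = hX.cfc (f - 1) * (Xᴴ * X) * hX.cfc (f - 1) := by
          rw [conjTranspose_mul, hX.conjTranspose_cfc]; simp only [mul_assoc]
      _ = hX.cfc 0 := by
          rw [hX.cfc_mul_self, hX.cfc_mul_cfc]
          exact hX.cfc_congr fun i => hvanish _ (eigenvalues_conjTranspose_mul_self_nonneg X i)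
      _ = 0 := hX.cfc_zero_eq
  rwa [hX.cfc_sub, hX.cfc_one_eq, mul_sub, mul_one, sub_eq_zero] at h0

end FunctionalCalculus

/-- `U = |X|⁻¹ Xᴴ`, with `|X|⁻¹` the pseudo-inverse (Lean's `0⁻¹ = 0` on the kernel of `X`). -/
lemma exists_trace_mul_eq_traceNorm (X : Matrix n n ℂ) :
    ∃ U : Matrix n n ℂ, (X * U).trace = traceNorm X ∧ (1 - U * Uᴴ).PosSemidef := by
  have hX := isHermitian_conjTranspose_mul_self X
  have hinv_mul : ∀ x : ℝ, (√x)⁻¹ * x = √x := fun x => by rw [inv_mul_eq_div, Real.div_sqrt]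
  refine ⟨hX.cfc (fun x => (√x)⁻¹) * Xᴴ, ?_, ?_⟩
  · rw [← mul_assoc, trace_mul_cfc_mul_conjTranspose,
      trace_cfc_eq_traceNorm hX fun x _ => hinv_mul x]
  · have hUU : hX.cfc (fun x => (√x)⁻¹) * Xᴴ * (hX.cfc (fun x => (√x)⁻¹) * Xᴴ)ᴴ
        = hX.cfc (fun x => (√x)⁻¹ * x * (√x)⁻¹) := by
      rw [conjTranspose_mul, conjTranspose_conjTranspose, hX.conjTranspose_cfc,
        mul_assoc, ← mul_assoc Xᴴ, ← mul_assoc, hX.cfc_mul_self, hX.cfc_mul_cfc]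
      rfl
    rw [hUU, ← hX.cfc_one_eq, ← hX.cfc_sub]
    refine hX.posSemidef_cfc fun i => ?_
    have hx := eigenvalues_conjTranspose_mul_self_nonneg X i
    rcases hx.eq_or_lt with h | h
    · simp [← h]
    · simp [hinv_mul, (Real.sqrt_pos.mpr h).ne']

/-- `Y = X |X|^{-1/2}` and `Z = |X|^{1/2}`. -/
lemma exists_mul_conjTranspose_eq (X : Matrix n n ℂ) :
    ∃ Y Z : Matrix n n ℂ, Y * Zᴴ = X ∧
      (Y * Yᴴ).trace = traceNorm X ∧ (Z * Zᴴ).trace = traceNorm X := by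
  have hX := isHermitian_conjTranspose_mul_self X
  have hsq : ∀ x : ℝ, √√x * √√x = √x := fun x => Real.mul_self_sqrt (Real.sqrt_nonneg x)
  refine ⟨X * hX.cfc (fun x => (√√x)⁻¹), hX.cfc (fun x => √√x), ?_, ?_, ?_⟩
  · rw [hX.conjTranspose_cfc, mul_assoc, hX.cfc_mul_cfc]
    refine mul_cfc_eq_self hX fun x hx => inv_mul_cancel₀ ?_
    positivity
  · rw [conjTranspose_mul, hX.conjTranspose_cfc, ← mul_assoc, mul_assoc X, hX.cfc_mul_cfc,
      trace_mul_cfc_mul_conjTranspose]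
    refine trace_cfc_eq_traceNorm hX fun x _ => ?_
    simp only [Pi.mul_apply]
    rw [← mul_inv, hsq, inv_mul_eq_div, Real.div_sqrt]
  · rw [hX.conjTranspose_cfc, hX.cfc_mul_cfc]
    exact trace_cfc_eq_traceNorm hX fun x _ => hsq x

lemma two_mul_traceNorm_le_of_posSemidef_fromBlocks {P Q X : Matrix n n ℂ}
    (h : (fromBlocks P X Xᴴ Q).PosSemidef) : 2 * traceNorm X ≤ P.trace.re + Q.trace.re := by
  obtain ⟨U, hXU, hU⟩ := exists_trace_mul_eq_traceNorm X
  have hQ : Q.PosSemidef := h.submatrix Sum.inr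
  set V : Matrix (n ⊕ n) n ℂ := fromRows 1 (-U) with hV
  have hgram : Vᴴ * fromBlocks P X Xᴴ Q * V = P - X * U - (X * U)ᴴ + Uᴴ * Q * U := by
    rw [hV, conjTranspose_fromRows_eq_fromCols_conjTranspose, Matrix.mul_assoc,
      fromBlocks_mul_fromRows, fromCols_mul_fromRows, conjTranspose_mul]
    simp only [conjTranspose_one, conjTranspose_neg]
    noncomm_ring
  have hQU : (Uᴴ * Q * U).trace = Q.trace - (Q * (1 - U * Uᴴ)).trace := by
    rw [trace_mul_cycle, mul_sub, mul_one, trace_sub, sub_sub_cancel, trace_mul_comm]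
  have hgram_nonneg := (h.conjTranspose_mul_mul_same V).re_trace_nonneg
  have hcompl_nonneg := (Complex.nonneg_iff.mp (hQ.trace_mul_nonneg hU)).1
  rw [hgram, trace_add, trace_sub, trace_sub, trace_conjTranspose, hXU, hQU] at hgram_nonneg
  simp only [Complex.add_re, Complex.sub_re, Complex.star_def, Complex.conj_ofReal,
    Complex.ofReal_re] at hgram_nonneg
  linarith

end TraceNorm

section Blocks

variable {A B : Type*}

lemma blockB_conjTranspose {M : Matrix (A × B) (A × B) ℂ} (hM : M.IsHermitian) (i j : A) :
    blockB M j i = (blockB M i j)ᴴ := by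
  ext b b'
  exact (congrFun (congrFun hM.eq (j, b)) (i, b')).symm

lemma submatrix_sumElim_eq_fromBlocks (M : Matrix (A × B) (A × B) ℂ) (i j : A) :
    M.submatrix (Sum.elim (Prod.mk i) (Prod.mk j)) (Sum.elim (Prod.mk i) (Prod.mk j)) =
      fromBlocks (blockB M i i) (blockB M i j) (blockB M j i) (blockB M j j) := by
  ext (b | b) (b' | b') <;> rfl

lemma trace_eq_sum_trace_blockB [Fintype A] [Fintype B] (M : Matrix (A × B) (A × B) ℂ) :
    M.trace = ∑ i, (blockB M i i).trace := by
  simp only [trace, Fintype.sum_prod_type, diag_apply, blockB]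

lemma two_mul_traceNorm_blockB_le [Fintype B] [DecidableEq B] {M : Matrix (A × B) (A × B) ℂ}
    (hM : M.PosSemidef) (i j : A) :
    2 * traceNorm (blockB M i j) ≤ (blockB M i i).trace.re + (blockB M j j).trace.re := by
  apply two_mul_traceNorm_le_of_posSemidef_fromBlocks
  rw [← blockB_conjTranspose hM.1, ← submatrix_sumElim_eq_fromBlocks]
  exact hM.submatrix _

lemma sum_sum_offDiag_add [Fintype A] [DecidableEq A] (t : A → ℝ) :
    ∑ i, ∑ j, (if i = j then 0 else t i + t j) = 2 * (Fintype.card A - 1) * ∑ i, t i := by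
  have h : ∀ i j : A, (if i = j then 0 else t i + t j) = t i + t j - if i = j then 2 * t i else 0 :=
    fun i j => by split_ifs with h <;> simp [h]; ring
  simp only [h, Finset.sum_sub_distrib, Finset.sum_add_distrib, Finset.sum_ite_eq,
    Finset.mem_univ, if_true, Finset.sum_const, Finset.card_univ, nsmul_eq_mul, ← Finset.mul_sum]
  ring

variable [Fintype A] [Fintype B] [DecidableEq A] [DecidableEq B]

lemma CIQl1_nonneg (M : Matrix (A × B) (A × B) ℂ) : 0 ≤ CIQl1 M :=
  Finset.sum_nonneg fun i _ => Finset.sum_nonneg fun j _ => by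
    split_ifs
    exacts [le_rfl, traceNorm_nonneg _]

lemma CIQl1_le_of_posSemidef {M : Matrix (A × B) (A × B) ℂ} (hM : M.PosSemidef) :
    CIQl1 M ≤ (Fintype.card A - 1) * M.trace.re := by
  have h : 2 * CIQl1 M ≤ 2 * ((Fintype.card A - 1) * M.trace.re) := by
    rw [trace_eq_sum_trace_blockB, Complex.re_sum, ← mul_assoc, ← sum_sum_offDiag_add, CIQl1,
      Finset.mul_sum]
    refine Finset.sum_le_sum fun i _ => ?_
    rw [Finset.mul_sum]
    refine Finset.sum_le_sum fun j _ => ?_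
    split_ifs
    · simp
    · exact two_mul_traceNorm_blockB_le hM i j
  linarith

end Blocks

section IQstates

variable {A B : Type*}

lemma sum_single_kronecker_blockB [Fintype A] [DecidableEq A] {N : Matrix (A × B) (A × B) ℂ}
    (hN : ∀ p q : A × B, p.1 ≠ q.1 → N p q = 0) :
    ∑ i, single i i 1 ⊗ₖ blockB N i i = N := by
  ext ⟨a, b⟩ ⟨a', b'⟩
  rcases eq_or_ne a a' with rfl | h
  · simp [Matrix.sum_apply, single_apply, blockB]
  · simp only [Matrix.sum_apply, kroneckerMap_apply, single_apply, hN (a, b) (a', b') h]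
    exact Finset.sum_eq_zero fun c _ => by
      simp [show ¬(c = a ∧ c = a') from fun hc => h (hc.1.symm.trans hc.2)]

variable [Fintype A] [Fintype B] [DecidableEq A] [DecidableEq B]

lemma trace_eq_one_of_mem_IQstates {σ : Matrix (A × B) (A × B) ℂ} (hσ : σ ∈ IQstates A B) :
    σ.trace = 1 := by
  obtain ⟨k, w, sA, tB, -, hw, hsA, htB, rfl⟩ := hσ
  simp [trace_sum, trace_kronecker, (hsA _).2.1, (htB _).2, ← Complex.ofReal_sum, hw]

lemma blockB_eq_zero_of_mem_IQstates {σ : Matrix (A × B) (A × B) ℂ} (hσ : σ ∈ IQstates A B)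
    {i j : A} (hij : i ≠ j) : blockB σ i j = 0 := by
  obtain ⟨k, w, sA, tB, -, -, hsA, -, rfl⟩ := hσ
  ext b b'
  simp [blockB, Matrix.sum_apply, (hsA _).2.2 i j hij]

lemma CIQl1_smul_sub_of_mem_IQstates {σ : Matrix (A × B) (A × B) ℂ} (hσ : σ ∈ IQstates A B)
    (c : ℂ) (ρ : Matrix (A × B) (A × B) ℂ) : CIQl1 (c • σ - ρ) = CIQl1 ρ := by
  refine Finset.sum_congr rfl fun i _ => Finset.sum_congr rfl fun j _ => ?_
  split_ifs with hij
  · rfl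
  · have : blockB (c • σ - ρ) i j = c • blockB σ i j - blockB ρ i j := rfl
    rw [this, blockB_eq_zero_of_mem_IQstates hσ hij, smul_zero, zero_sub, traceNorm_neg]

lemma mem_IQstates_of_blockDiagonal {N : Matrix (A × B) (A × B) ℂ} (hN : N.PosSemidef)
    (htr : N.trace = 1) (hblk : ∀ p q : A × B, p.1 ≠ q.1 → N p q = 0) : N ∈ IQstates A B := by
  have : Nonempty B := by
    by_contra hB
    rw [not_nonempty_iff] at hB
    simp [trace] at htr
  have hstates : ∀ i, ∃ τ : Matrix B B ℂ, τ.PosSemidef ∧ τ.trace = 1 ∧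
      ((blockB N i i).trace.re : ℂ) • τ = blockB N i i :=
    fun i => (hN.submatrix (Prod.mk i)).exists_trace_eq_one_smul_eq
  choose τ hτ using hstates
  have hterm : ∀ i, ((blockB N i i).trace.re : ℂ) • (single i i 1 ⊗ₖ τ i) =
      single i i 1 ⊗ₖ blockB N i i := fun i => by
    rw [← kronecker_smul, (hτ i).2.2]
  set e := (Fintype.equivFin A).symm
  refine ⟨Fintype.card A, fun m => (blockB N (e m) (e m)).trace.re,
    fun m => single (e m) (e m) 1, τ ∘ e,
    fun m => (hN.submatrix (Prod.mk (e m))).re_trace_nonneg, ?_,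
    fun m => ⟨posSemidef_single_one _, trace_single_eq_same _ _,
      fun i j hij => single_apply_of_ne _ _ _ _ _ fun h => hij (h.1.symm.trans h.2)⟩,
    fun m => ⟨(hτ _).1, (hτ _).2.1⟩, ?_⟩
  · refine (Equiv.sum_comp e fun i => (blockB N i i).trace.re).trans ?_
    rw [← Complex.re_sum, ← trace_eq_sum_trace_blockB, htr, Complex.one_re]
  · symm
    calc ∑ m, ((blockB N (e m) (e m)).trace.re : ℂ) • (single (e m) (e m) 1 ⊗ₖ τ (e m))
        = ∑ i, ((blockB N i i).trace.re : ℂ) • (single i i 1 ⊗ₖ τ i) :=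
          Equiv.sum_comp e fun i => ((blockB N i i).trace.re : ℂ) • (single i i 1 ⊗ₖ τ i)
      _ = N := by simp only [hterm, sum_single_kronecker_blockB hblk]

end IQstates

section Bounds

variable {A B : Type*} [Fintype A] [Fintype B] [DecidableEq A] [DecidableEq B]

lemma one_add_CIQl1_div_le (hd : 2 ≤ Fintype.card A) {ρ σ : Matrix (A × B) (A × B) ℂ}
    (hTr : ρ.trace = 1) (hσ : σ ∈ IQstates A B) {l : ℝ} (h : ((l : ℂ) • σ - ρ).PosSemidef) :
    1 + CIQl1 ρ / ((Fintype.card A : ℝ) - 1) ≤ l := by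
  have hle := CIQl1_le_of_posSemidef h
  have htr : ((l : ℂ) • σ - ρ).trace.re = l - 1 := by
    simp [trace_sub, trace_smul, trace_eq_one_of_mem_IQstates hσ, hTr]
  rw [CIQl1_smul_sub_of_mem_IQstates hσ, htr] at hle
  have hd' : (0 : ℝ) < Fintype.card A - 1 := by
    have : (2 : ℝ) ≤ Fintype.card A := by exact_mod_cast hd
    linarith
  rw [← le_sub_iff_add_le', div_le_iff₀ hd', mul_comm]
  exact hle

lemma exists_posSemidef_kronecker_dilation (X : Matrix B B ℂ) (i j : A) :
    ∃ P Q : Matrix B B ℂ, P.trace = traceNorm X ∧ Q.trace = traceNorm X ∧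
      (single i i 1 ⊗ₖ P + single j j 1 ⊗ₖ Q - single i j 1 ⊗ₖ X
        - single j i 1 ⊗ₖ Xᴴ).PosSemidef := by
  obtain ⟨Y, Z, hYZ, hY, hZ⟩ := exists_mul_conjTranspose_eq X
  refine ⟨Y * Yᴴ, Z * Zᴴ, hY, hZ, ?_⟩
  have hgram : (single i j 1 ⊗ₖ Y - single j j 1 ⊗ₖ Z) * (single i j 1 ⊗ₖ Y - single j j 1 ⊗ₖ Z)ᴴ =
      single i i 1 ⊗ₖ (Y * Yᴴ) + single j j 1 ⊗ₖ (Z * Zᴴ) - single i j 1 ⊗ₖ X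
        - single j i 1 ⊗ₖ Xᴴ := by
    simp only [conjTranspose_sub, conjTranspose_kronecker, conjTranspose_single, star_one,
      sub_mul, mul_sub, ← mul_kronecker_mul, single_mul_single_same, mul_one, ← hYZ,
      conjTranspose_mul, conjTranspose_conjTranspose]
    abel
  rw [← hgram]
  exact posSemidef_self_mul_conjTranspose _

/-- The factor `2⁻¹` is there because every block `ρ_ij`, `i ≠ j`, is cancelled twice: by the
dilation of the pair `(i, j)` and by that of `(j, i)`. -/
lemma exists_blockDiagonal_sub_posSemidef {ρ : Matrix (A × B) (A × B) ℂ} (hρ : ρ.PosSemidef) :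
    ∃ N : Matrix (A × B) (A × B) ℂ, (N - ρ).PosSemidef ∧ N.trace = ρ.trace + CIQl1 ρ ∧
      ∀ p q : A × B, p.1 ≠ q.1 → N p q = 0 := by
  choose P Q hP hQ hK using fun i j => exists_posSemidef_kronecker_dilation (blockB ρ i j) i j
  set K : A → A → Matrix (A × B) (A × B) ℂ := fun i j =>
    single i i 1 ⊗ₖ P i j + single j j 1 ⊗ₖ Q i j - single i j 1 ⊗ₖ blockB ρ i j
      - single j i 1 ⊗ₖ (blockB ρ i j)ᴴ with hKdef
  refine ⟨ρ + (2⁻¹ : ℂ) • ∑ i, ∑ j, if i = j then 0 else K i j, ?_, ?_, ?_⟩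
  · rw [add_sub_cancel_left]
    refine .smul ?_ (by norm_num [Complex.nonneg_iff])
    refine posSemidef_sum _ fun i _ => posSemidef_sum _ fun j _ => ?_
    split_ifs
    exacts [.zero, hK i j]
  · have htrK : ∀ i j, i ≠ j → (K i j).trace = 2 * traceNorm (blockB ρ i j) := by
      intro i j hij
      simp only [hKdef, trace_sub, trace_add, trace_kronecker, trace_single_eq_same, hP, hQ,
        one_mul, trace_single_eq_of_ne, ne_eq, hij, Ne.symm hij, not_false_eq_true, zero_mul,
        sub_zero]
      ring
    rw [trace_add, trace_smul, trace_sum, CIQl1, smul_eq_mul, Finset.mul_sum]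
    push_cast
    congr 1
    refine Finset.sum_congr rfl fun i _ => ?_
    rw [trace_sum, Finset.mul_sum]
    refine Finset.sum_congr rfl fun j _ => ?_
    split_ifs with hij
    · simp
    · rw [htrK i j hij]; ring
  · rintro ⟨a, b⟩ ⟨a', b'⟩ (haa' : a ≠ a')
    have hentry : ∀ x y, (if x = y then 0 else K x y) (a, b) (a', b') =
        -((if x = a ∧ y = a' then ρ (a, b) (a', b') else 0) +
          (if x = a' ∧ y = a then ρ (a, b) (a', b') else 0)) := by
      intro x y
      simp only [hKdef, ← blockB_conjTranspose hρ.1, Matrix.ite_apply, Matrix.sub_apply,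
        Matrix.add_apply, kroneckerMap_apply, single_apply, blockB]
      by_cases hxa : x = a <;> by_cases hya : y = a <;> by_cases hxa' : x = a' <;>
        by_cases hya' : y = a' <;> simp_all
    simp only [Matrix.add_apply, Matrix.smul_apply, Matrix.sum_apply, hentry, ite_and,
      Finset.sum_add_distrib, Finset.sum_neg_distrib, Finset.sum_ite_irrel, Finset.sum_ite_eq',
      Finset.mem_univ, if_true, Finset.sum_const_zero, smul_eq_mul]
    ring

lemma exists_mem_IQstates_smul_sub_posSemidef {ρ : Matrix (A × B) (A × B) ℂ}
    (hρ : ρ.PosSemidef) (hTr : ρ.trace = 1) :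
    ∃ σ ∈ IQstates A B, (((1 + CIQl1 ρ : ℝ) : ℂ) • σ - ρ).PosSemidef := by
  obtain ⟨N, hNρ, hNtr, hblk⟩ := exists_blockDiagonal_sub_posSemidef hρ
  have hc : (1 + CIQl1 ρ : ℝ) ≠ 0 := by linarith [CIQl1_nonneg ρ]
  have hN : N.PosSemidef := by simpa using hρ.add hNρ
  refine ⟨(((1 + CIQl1 ρ)⁻¹ : ℝ) : ℂ) • N, mem_IQstates_of_blockDiagonal ?_ ?_ ?_, ?_⟩
  · exact hN.smul (Complex.zero_le_real.mpr (inv_nonneg.mpr (by linarith [CIQl1_nonneg ρ])))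
  · rw [trace_smul, hNtr, hTr, smul_eq_mul]
    push_cast
    exact inv_mul_cancel₀ (by exact_mod_cast hc)
  · intro p q hpq
    rw [Matrix.smul_apply, hblk p q hpq, smul_zero]
  · rwa [smul_smul, ← Complex.ofReal_mul, mul_inv_cancel₀ hc, Complex.ofReal_one, one_smul]

end Bounds

/-- 1 + C^{A|B}_{l1}(ρ)/(d_A − 1) ≤ 2^{C^{A|B}_max(ρ)} ≤ 1 + C^{A|B}_{l1}(ρ). -/
theorem CmaxIQ_vs_CIQl1 {A B : Type*} [Fintype A] [Fintype B] [DecidableEq A] [DecidableEq B]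
    (hd : 2 ≤ Fintype.card A)
    (ρ : Matrix (A × B) (A × B) ℂ) (hρ : ρ.PosSemidef) (hTr : ρ.trace = 1) :
    1 + CIQl1 ρ / ((Fintype.card A : ℝ) - 1) ≤ (2 : ℝ) ^ CmaxIQ ρ ∧
    (2 : ℝ) ^ CmaxIQ ρ ≤ 1 + CIQl1 ρ := by
  set S := {l : ℝ | ∃ σ ∈ IQstates A B, ((l : ℂ) • σ - ρ).PosSemidef} with hS
  have hupper : 1 + CIQl1 ρ ∈ S := exists_mem_IQstates_smul_sub_posSemidef hρ hTr
  have hlower : ∀ l ∈ S, 1 + CIQl1 ρ / ((Fintype.card A : ℝ) - 1) ≤ l :=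
    fun l ⟨σ, hσ, h⟩ => one_add_CIQl1_div_le hd hTr hσ h
  have hInf_ge := le_csInf ⟨_, hupper⟩ hlower
  have hInf_le := csInf_le ⟨_, hlower⟩ hupper
  have hpos : 0 < 1 + CIQl1 ρ / ((Fintype.card A : ℝ) - 1) := by
    have : (2 : ℝ) ≤ Fintype.card A := by exact_mod_cast hd
    have : 0 ≤ CIQl1 ρ / ((Fintype.card A : ℝ) - 1) := div_nonneg (CIQl1_nonneg ρ) (by linarith)
    linarith
  rw [CmaxIQ, ← hS, Real.rpow_logb two_pos (by norm_num) (hpos.trans_le hInf_ge)]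
  exact ⟨hInf_ge, hInf_le⟩
end
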